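/- Let S_r be a finite set in a metric space, p_q a query point, and p_r* ∈ S_r its (unique) nearest neighbor with d(p_q, p_r*) > 2^(s+1). Suppose P ⊆ S_r is a set of points each satisfying d(p_q, p) ≤ d(p_q, p_r*) + 3·2^(s+1). Let c be the expansion constant of S_r ∪ {p_q}. Then |P| ≤ c³. -/
import Mathlib


open scoped Classical

/-- If the nearest neighbor `p_r*` of `p_q` in `S_r` is unique and farther than
`2^(s+1)`, then any set `P ⊆ S_r` of points within
`d(p_q, p_r*) + 3·2^(s+1)` of `p_q` has at most `c³` points, where `c` is the
expansion constant of `S_r ∪ {p_q}`. -/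
theorem nn_reference_set_bound {X : Type*} [MetricSpace X]
    (Sr P : Finset X) (pq pstar : X) (s : ℤ) (c : ℝ)
    (hstar : pstar ∈ Sr)
    (hnearest : ∀ p ∈ Sr, dist pq pstar ≤ dist pq p)
    (hunique : ∀ p ∈ Sr, p ≠ pstar → dist pq pstar < dist pq p)
    (hfar : (2 : ℝ) ^ (s + 1) < dist pq pstar)
    (hc : 2 ≤ c)
    (hexp : ∀ p ∈ insert pq Sr, ∀ Δ : ℝ, 0 < Δ →
      (((insert pq Sr).filter (fun r => dist p r ≤ 2 * Δ)).card : ℝ) ≤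
        c * (((insert pq Sr).filter (fun r => dist p r ≤ Δ)).card : ℝ))
    (hP : P ⊆ Sr)
    (hPnear : ∀ p ∈ P, dist pq p ≤ dist pq pstar + 3 * (2 : ℝ) ^ (s + 1)) :
    (P.card : ℝ) ≤ c ^ 3 := by
  set d := dist pq pstar with hd
  have hpow : (0 : ℝ) < (2 : ℝ) ^ (s + 1) := by positivity
  have hdpos : 0 < d := lt_trans hpow hfar
  have hmem : pq ∈ insert pq Sr := Finset.mem_insert_self _ _
  have h1 := hexp pq hmem (2 * d) (by linarith)
  have h2 := hexp pq hmem d hdpos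
  have h3 := hexp pq hmem (d / 2) (by linarith)
  have e1 : 2 * (d / 2) = d := by ring
  rw [e1] at h3
  -- the innermost ball contains only pq
  have hsmall : (insert pq Sr).filter (fun r => dist pq r ≤ d / 2) = {pq} := by
    ext x
    simp only [Finset.mem_filter, Finset.mem_insert, Finset.mem_singleton]
    constructor
    · rintro ⟨hx | hx, hdx⟩
      · exact hx
      · exfalso
        have := hnearest x hx
        linarith
    · rintro rfl
      refine ⟨Or.inl rfl, ?_⟩
      simp only [dist_self]
      linarith
  -- P is contained in the outer ball
  have hsub : P ⊆ (insert pq Sr).filter (fun r => dist pq r ≤ 2 * (2 * d)) := by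
    intro p hp
    refine Finset.mem_filter.mpr ⟨Finset.mem_insert_of_mem (hP hp), ?_⟩
    have := hPnear p hp
    have h4 : dist pq p ≤ d + 3 * (2 : ℝ) ^ (s + 1) := this
    linarith
  have hcardP : (P.card : ℝ) ≤
      (((insert pq Sr).filter (fun r => dist pq r ≤ 2 * (2 * d))).card : ℝ) := by
    exact_mod_cast Finset.card_le_card hsub
  have hone : (((insert pq Sr).filter (fun r => dist pq r ≤ d / 2)).card : ℝ) = 1 := by
    rw [hsmall]; simp
  rw [hone] at h3
  have hb : (0 : ℝ) ≤ (((insert pq Sr).filter (fun r => dist pq r ≤ 2 * d)).card : ℝ) := by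
    positivity
  have he : (0 : ℝ) ≤ (((insert pq Sr).filter (fun r => dist pq r ≤ d)).card : ℝ) := by
    positivity
  have hcpos : (0 : ℝ) < c := by linarith
  nlinarith [mul_le_mul_of_nonneg_left h2 hcpos.le,
    mul_le_mul_of_nonneg_left h3 (mul_nonneg hcpos.le hcpos.le)]
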